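/- Let μ be a probability measure on ℝ with finite first moment, mean m_μ, and upper support endpoint r_μ. Define the Hardy–Littlewood transform μ^HL as the law of AVaR_μ(ξ) for ξ uniform on [0,1]. Then for every y ∈ (m_μ, r_μ), μ^HL([y,∞)) = inf_{z > 0} C_μ(y − z)/z. -/

import Mathlib

open MeasureTheory Set Filter Topology

/-- Tail function `μ([x,∞))`. -/
noncomputable def tailFn (μ : Measure ℝ) (x : ℝ) : ℝ := (μ (Ici x)).toReal

/-- Tail quantile function: left-continuous inverse of the tail function. -/
noncomputable def tailQ (μ : Measure ℝ) (l : ℝ) : ℝ := sInf {x : ℝ | tailFn μ x < l}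

/-- Call function `C_μ(K) = ∫ (s-K)⁺ μ(ds)`. -/
noncomputable def callFn (μ : Measure ℝ) (K : ℝ) : ℝ := ∫ s, max (s - K) 0 ∂μ

/-- Average Value at Risk at level `l`. -/
noncomputable def avar (μ : Measure ℝ) (l : ℝ) : ℝ := (1 / l) * ∫ u in (0 : ℝ)..l, tailQ μ u

/-- Hardy–Littlewood transform of `μ`: the law of `AVaR_μ(ξ)` for `ξ` uniform on `[0,1]`. -/
noncomputable def hlTransform (μ : Measure ℝ) : Measure ℝ :=
  Measure.map (avar μ) (volume.restrict (Ioc (0 : ℝ) 1))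

/-!
Write `q = tailQ μ`. Under the uniform distribution on `(0,1)` the law of `q` is `μ`, so
`C_μ(K) = ∫₀¹ (q u - K)⁺ du`, the mean is `∫₀¹ q`, and `λ · AVaR_μ(λ) = ∫₀^λ q`. As `q` is
antitone, `AVaR_μ` is continuous and antitone on `(0,1]`; it equals `m_μ < y` at `1` and exceeds
`y` near `0` because `μ((y,∞)) > 0`. Hence `{AVaR_μ ≥ y} = (0,λ]` with `AVaR_μ(λ) = y`, which gives
`μ^HL([y,∞)) = λ`. For every strike `K`, `C_μ(K) ≥ ∫₀^λ (q - K) = λ (y - K)`, with equality at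
`K = q(λ)` since `(q - q(λ))⁺` vanishes after `λ`; and `q(λ) < y`. Putting `K = y - z` gives the
formula.
-/

section TailQuantile

variable (μ : Measure ℝ)

lemma antitone_tailFn [IsFiniteMeasure μ] : Antitone (tailFn μ) := fun _ _ h =>
  ENNReal.toReal_mono (measure_ne_top μ _) (measure_mono (Ici_subset_Ici.mpr h))

lemma tendsto_measure_Ici_atTop [IsFiniteMeasure μ] :
    Tendsto (fun x => μ (Ici x)) atTop (𝓝 0) := by
  have h := tendsto_measure_iInter_atTop (μ := μ) (fun _ => measurableSet_Ici.nullMeasurableSet)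
    antitone_Ici ⟨0, measure_ne_top μ _⟩
  rwa [iInter_eq_empty_iff.mpr fun x => ⟨x + 1, by simp⟩, measure_empty] at h

lemma tendsto_measure_Ici_sub_nhdsGT [IsFiniteMeasure μ] (x : ℝ) :
    Tendsto (fun r => μ (Ici (x - r))) (𝓝[>] 0) (𝓝 (μ (Ici x))) := by
  have h := tendsto_measure_biInter_gt (μ := μ) (s := fun r => Ici (x - r)) (a := 0)
    (fun _ _ => measurableSet_Ici.nullMeasurableSet)
    (fun _ _ _ hij => Ici_subset_Ici.mpr (by linarith)) ⟨1, one_pos, measure_ne_top μ _⟩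
  have hInter : ⋂ r > (0 : ℝ), Ici (x - r) = Ici x := by
    ext t
    simp only [mem_iInter, mem_Ici, sub_le_iff_le_add]
    exact ⟨fun h => le_of_forall_pos_le_add fun r hr => h r hr,
      fun h r hr => h.trans (le_add_of_nonneg_right hr.le)⟩
  rwa [hInter] at h

variable [IsProbabilityMeasure μ] {u x : ℝ}

lemma exists_tailFn_lt (hu : 0 < u) : ∃ x, tailFn μ x < u :=
  (((tendsto_measure_Ici_atTop μ).eventually_lt_const (ENNReal.ofReal_pos.mpr hu)).exists).imp
    fun _ => ENNReal.toReal_lt_of_lt_ofReal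

lemma exists_lt_tailFn (hu : 0 < u) (hu1 : u < 1) : ∃ x, u < tailFn μ x := by
  have h := (tendsto_measure_Ici_atBot μ).eventually_const_lt
    (show ENNReal.ofReal u < μ univ by simpa using hu1)
  exact h.exists.imp fun _ hx =>
    (ENNReal.ofReal_lt_iff_lt_toReal hu.le (measure_ne_top μ _)).mp hx

lemma bddBelow_setOf_tailFn_lt (hu : 0 < u) (hu1 : u < 1) : BddBelow {x | tailFn μ x < u} := by
  obtain ⟨x₀, hx₀⟩ := exists_lt_tailFn μ hu hu1
  exact ⟨x₀, fun x hx => le_of_not_gt fun hlt =>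
    (hx₀.trans_le (antitone_tailFn μ hlt.le)).not_gt hx⟩

lemma tailQ_lt_of_tailFn_lt (hu : 0 < u) (hu1 : u < 1) (hx : tailFn μ x < u) :
    tailQ μ u < x := by
  have hlt : μ (Ici x) < ENNReal.ofReal u :=
    (ENNReal.lt_ofReal_iff_toReal_lt (measure_ne_top μ _)).mpr hx
  obtain ⟨r, hr, hr0⟩ := (((tendsto_measure_Ici_sub_nhdsGT μ x).eventually_lt_const hlt).and
    self_mem_nhdsWithin).exists
  calc tailQ μ u ≤ x - r :=
        csInf_le (bddBelow_setOf_tailFn_lt μ hu hu1) (ENNReal.toReal_lt_of_lt_ofReal hr)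
    _ < x := sub_lt_self x hr0

lemma le_tailQ_iff (hu : 0 < u) (hu1 : u < 1) : x ≤ tailQ μ u ↔ u ≤ tailFn μ x := by
  refine ⟨fun h => le_of_not_gt fun hlt => (tailQ_lt_of_tailFn_lt μ hu hu1 hlt).not_ge h,
    fun h => le_csInf (exists_tailFn_lt μ hu) fun b hb => le_of_not_gt fun hbx => ?_⟩
  exact (h.trans (antitone_tailFn μ hbx.le)).not_gt hb

lemma antitoneOn_tailQ : AntitoneOn (tailQ μ) (Ioo 0 1) := fun _ ha _ hb hab =>
  (le_tailQ_iff μ ha.1 ha.2).mpr (hab.trans ((le_tailQ_iff μ hb.1 hb.2).mp le_rfl))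

lemma aemeasurable_tailQ : AEMeasurable (tailQ μ) (volume.restrict (Ioo 0 1)) :=
  aemeasurable_restrict_of_antitoneOn measurableSet_Ioo (antitoneOn_tailQ μ)

-- The superlevel set `{u ∈ (0,1) | a ≤ q u}` lies between `(0, t)` and `(0, t]`, `t = μ([a,∞))`.
lemma map_tailQ : Measure.map (tailQ μ) (volume.restrict (Ioo 0 1)) = μ := by
  refine (Measure.ext_of_Ici μ _ fun a => ?_).symm
  rw [Measure.map_apply_of_aemeasurable (aemeasurable_tailQ μ) measurableSet_Ici,
    Measure.restrict_apply' measurableSet_Ioo]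
  have ht1 : tailFn μ a ≤ 1 := ENNReal.toReal_le_of_le_ofReal zero_le_one (by simp [prob_le_one])
  have hlower : Ioo 0 (tailFn μ a) ⊆ tailQ μ ⁻¹' Ici a ∩ Ioo 0 1 := fun u hu =>
    ⟨(le_tailQ_iff μ hu.1 (hu.2.trans_le ht1)).mpr hu.2.le, hu.1, hu.2.trans_le ht1⟩
  have hupper : tailQ μ ⁻¹' Ici a ∩ Ioo 0 1 ⊆ Ioc 0 (tailFn μ a) := fun u ⟨hu, hu0, hu1⟩ =>
    ⟨hu0, (le_tailQ_iff μ hu0 hu1).mp hu⟩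
  have h := le_antisymm ((measure_mono hupper).trans_eq Real.volume_Ioc)
    (Real.volume_Ioo.symm.trans_le (measure_mono hlower))
  rw [h, sub_zero, tailFn, ENNReal.ofReal_toReal (measure_ne_top μ _)]

lemma integral_comp_tailQ {f : ℝ → ℝ} (hf : AEStronglyMeasurable f μ) :
    ∫ u in Ioo 0 1, f (tailQ μ u) = ∫ s, f s ∂μ := by
  have h := integral_map (aemeasurable_tailQ μ) (by rwa [map_tailQ μ] : AEStronglyMeasurable f _)
  rwa [map_tailQ μ, eq_comm] at h

end TailQuantile

noncomputable def tailQIntegral (μ : Measure ℝ) (l : ℝ) : ℝ := ∫ u in (0 : ℝ)..l, tailQ μ u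

lemma avar_eq_div (μ : Measure ℝ) (l : ℝ) : avar μ l = tailQIntegral μ l / l :=
  one_div_mul_eq_div _ _

lemma tailQIntegral_one (μ : Measure ℝ) [IsProbabilityMeasure μ] :
    tailQIntegral μ 1 = ∫ s, s ∂μ := by
  rw [tailQIntegral, intervalIntegral.integral_of_le zero_le_one, integral_Ioc_eq_integral_Ioo]
  exact integral_comp_tailQ μ aestronglyMeasurable_id

lemma avar_one (μ : Measure ℝ) [IsProbabilityMeasure μ] : avar μ 1 = ∫ s, s ∂μ := by
  rw [avar_eq_div, div_one, tailQIntegral_one μ]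

section Integrable

variable (μ : Measure ℝ) [IsProbabilityMeasure μ] (hμ : Integrable id μ)
include hμ

lemma integrableOn_tailQ : IntegrableOn (tailQ μ) (Ioo 0 1) :=
  (integrable_map_measure aestronglyMeasurable_id (aemeasurable_tailQ μ)).mp
    (by rwa [map_tailQ μ])

lemma integrableOn_Icc_tailQ : IntegrableOn (tailQ μ) (Icc 0 1) :=
  (integrableOn_Icc_iff_integrableOn_Ioo).mpr (integrableOn_tailQ μ hμ)

lemma intervalIntegrable_tailQ {a b : ℝ} (ha : a ∈ Icc 0 1) (hb : b ∈ Icc 0 1) :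
    IntervalIntegrable (tailQ μ) volume a b :=
  ((integrableOn_Icc_tailQ μ hμ).mono_set (uIcc_subset_Icc ha hb)).intervalIntegrable

lemma continuousOn_tailQIntegral : ContinuousOn (tailQIntegral μ) (Icc 0 1) := by
  have h := intervalIntegral.continuousOn_primitive_interval (μ := volume) (a := 0) (b := 1)
    ((integrableOn_Icc_tailQ μ hμ).mono_set (uIcc_of_le zero_le_one).subset)
  rwa [uIcc_of_le zero_le_one] at h

lemma sub_mul_tailQ_le_integral {a b : ℝ} (ha : 0 ≤ a) (hab : a ≤ b) (hb : b < 1) :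
    (b - a) * tailQ μ b ≤ ∫ u in a..b, tailQ μ u := by
  have h := intervalIntegral.integral_mono_on_of_le_Ioo hab intervalIntegrable_const
    (intervalIntegrable_tailQ μ hμ ⟨ha, hab.trans hb.le⟩ ⟨ha.trans hab, hb.le⟩)
    fun u hu => antitoneOn_tailQ μ ⟨ha.trans_lt hu.1, hu.2.trans hb⟩
      ⟨(ha.trans_lt hu.1).trans hu.2, hb⟩ hu.2.le
  rwa [intervalIntegral.integral_const, smul_eq_mul] at h

lemma integral_le_sub_mul_tailQ {a b : ℝ} (ha : 0 < a) (hab : a ≤ b) (hb : b < 1) :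
    ∫ u in a..b, tailQ μ u ≤ (b - a) * tailQ μ a := by
  have h := intervalIntegral.integral_mono_on_of_le_Ioo hab
    (intervalIntegrable_tailQ μ hμ ⟨ha.le, hab.trans hb.le⟩ ⟨ha.le.trans hab, hb.le⟩)
    intervalIntegrable_const
    fun u hu => antitoneOn_tailQ μ ⟨ha, hab.trans_lt hb⟩ ⟨ha.trans hu.1, hu.2.trans hb⟩ hu.1.le
  rwa [intervalIntegral.integral_const, smul_eq_mul] at h

lemma tailQIntegral_add_integral {a b : ℝ} (ha : a ∈ Icc 0 1) (hb : b ∈ Icc 0 1) :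
    tailQIntegral μ a + ∫ u in a..b, tailQ μ u = tailQIntegral μ b :=
  intervalIntegral.integral_add_adjacent_intervals
    (intervalIntegrable_tailQ μ hμ ⟨le_rfl, zero_le_one⟩ ha) (intervalIntegrable_tailQ μ hμ ha hb)

lemma tailQ_le_avar {l : ℝ} (hl : l ∈ Ioo 0 1) : tailQ μ l ≤ avar μ l := by
  rw [avar_eq_div, le_div_iff₀ hl.1, mul_comm]
  simpa [tailQIntegral] using sub_mul_tailQ_le_integral μ hμ le_rfl hl.1.le hl.2

lemma tailQ_lt_avar {δ l : ℝ} (hδ : 0 < δ) (hδl : δ ≤ l) (hl : l < 1)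
    (hq : tailQ μ l < tailQ μ δ) : tailQ μ l < avar μ l := by
  rw [avar_eq_div, lt_div_iff₀ (hδ.trans_le hδl),
    ← tailQIntegral_add_integral μ hμ ⟨hδ.le, hδl.trans hl.le⟩ ⟨hδ.le.trans hδl, hl.le⟩]
  have hδq := tailQ_le_avar μ hμ ⟨hδ, hδl.trans_lt hl⟩
  rw [avar_eq_div, le_div_iff₀ hδ] at hδq
  nlinarith [sub_mul_tailQ_le_integral μ hμ hδ.le hδl hl]

lemma antitoneOn_avar : AntitoneOn (avar μ) (Ioo 0 1) := by
  intro a ha b hb hab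
  rw [avar_eq_div, avar_eq_div, div_le_div_iff₀ hb.1 ha.1,
    ← tailQIntegral_add_integral μ hμ (Ioo_subset_Icc_self ha) (Ioo_subset_Icc_self hb)]
  have haq := tailQ_le_avar μ hμ ha
  rw [avar_eq_div, le_div_iff₀ ha.1] at haq
  nlinarith [mul_le_mul_of_nonneg_left (integral_le_sub_mul_tailQ μ hμ ha.1 hab hb.2) ha.1.le,
    mul_le_mul_of_nonneg_left haq (sub_nonneg.mpr hab)]

lemma continuousOn_avar : ContinuousOn (avar μ) (Ioc 0 1) := by
  rw [show avar μ = fun l => tailQIntegral μ l / l from funext (avar_eq_div μ)]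
  exact (continuousOn_tailQIntegral μ hμ).mono Ioc_subset_Icc_self |>.div continuousOn_id
    fun l hl => hl.1.ne'

end Integrable

section CallFunction

variable (μ : Measure ℝ) [IsProbabilityMeasure μ]

lemma callFn_eq_setIntegral_tailQ (K : ℝ) :
    callFn μ K = ∫ u in Ioo 0 1, max (tailQ μ u - K) 0 :=
  (integral_comp_tailQ μ
    (by fun_prop : Continuous fun s : ℝ => max (s - K) 0).aestronglyMeasurable).symm

variable (hμ : Integrable id μ)
include hμ

lemma setIntegral_indicator_tailQ_sub {l : ℝ} (hl0 : 0 ≤ l) (hl1 : l < 1) (c : ℝ) :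
    ∫ u in Ioo 0 1, (Ioc 0 l).indicator (fun u => tailQ μ u - c) u =
      tailQIntegral μ l - c * l := by
  rw [setIntegral_indicator measurableSet_Ioc, inter_eq_right.mpr (Ioc_subset_Ioo_right hl1),
    ← intervalIntegral.integral_of_le hl0, intervalIntegral.integral_sub
      (intervalIntegrable_tailQ μ hμ ⟨le_rfl, zero_le_one⟩ ⟨hl0, hl1.le⟩) intervalIntegrable_const,
    intervalIntegral.integral_const, smul_eq_mul, sub_zero, tailQIntegral, mul_comm]

lemma tailQIntegral_sub_le_callFn {l : ℝ} (hl0 : 0 ≤ l) (hl1 : l < 1) (K : ℝ) :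
    tailQIntegral μ l - K * l ≤ callFn μ K := by
  have hint := (integrableOn_tailQ μ hμ).sub (integrable_const K)
  rw [← setIntegral_indicator_tailQ_sub μ hμ hl0 hl1, callFn_eq_setIntegral_tailQ]
  refine setIntegral_mono (hint.indicator measurableSet_Ioc) hint.pos_part fun u => ?_
  by_cases hu : u ∈ Ioc 0 l
  · simp [indicator_of_mem hu]
  · simp [indicator_of_notMem hu]

lemma callFn_tailQ {l : ℝ} (hl : l ∈ Ioo 0 1) :
    callFn μ (tailQ μ l) = tailQIntegral μ l - tailQ μ l * l := by
  rw [← setIntegral_indicator_tailQ_sub μ hμ hl.1.le hl.2, callFn_eq_setIntegral_tailQ]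
  refine setIntegral_congr_fun measurableSet_Ioo fun u hu => ?_
  by_cases hul : u ≤ l
  · rw [indicator_of_mem (show u ∈ Ioc 0 l from ⟨hu.1, hul⟩),
      max_eq_left (sub_nonneg.mpr (antitoneOn_tailQ μ hu hl hul))]
  · rw [indicator_of_notMem (show u ∉ Ioc 0 l from fun h => hul h.2),
      max_eq_right (sub_nonpos.mpr (antitoneOn_tailQ μ hl hu (le_of_not_ge hul)))]

-- The optimal strike is `K = q l`, i.e. `z = y - q l`.
lemma iInf_callFn_div_eq {l y : ℝ} (hl : l ∈ Ioo 0 1) (hI : tailQIntegral μ l = y * l)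
    (hq : tailQ μ l < y) : ⨅ z : Ioi (0 : ℝ), callFn μ (y - z) / z = l := by
  have hlower (z : Ioi (0 : ℝ)) : l ≤ callFn μ (y - z) / z := by
    rw [le_div_iff₀ z.2]
    linarith [tailQIntegral_sub_le_callFn μ hμ hl.1.le hl.2 (y - z)]
  refine le_antisymm (ciInf_le_of_le ⟨l, forall_mem_range.mpr hlower⟩
    ⟨y - tailQ μ l, sub_pos.mpr hq⟩ ?_) (le_ciInf hlower)
  rw [sub_sub_cancel, callFn_tailQ μ hμ hl, hI, div_le_iff₀ (sub_pos.mpr hq)]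
  linarith

end CallFunction

lemma AntitoneOn.exists_preimage_Ici_inter_Ioc_eq {f : ℝ → ℝ} {y δ : ℝ}
    (hanti : AntitoneOn f (Ioo 0 1)) (hcont : ContinuousOn f (Ioc 0 1)) (hδ : δ ∈ Ioc 0 1)
    (hyδ : y ≤ f δ) (hy1 : f 1 < y) :
    ∃ l ∈ Ioo 0 1, f l = y ∧ f ⁻¹' Ici y ∩ Ioc 0 1 = Ioc 0 l := by
  set S := Icc δ 1 ∩ f ⁻¹' Ici y
  have hSbdd : BddAbove S := ⟨1, fun l hl => hl.1.2⟩
  have hSc : IsClosed S :=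
    (hcont.mono (Icc_subset_Ioc hδ.1 le_rfl)).preimage_isClosed_of_isClosed isClosed_Icc isClosed_Ici
  obtain ⟨⟨hδl, hl1⟩, hyl⟩ := hSc.csSup_mem ⟨δ, ⟨le_rfl, hδ.2⟩, hyδ⟩ hSbdd
  set l := sSup S
  have hl0 : 0 < l := hδ.1.trans_le hδl
  have hl1' : l < 1 := hl1.lt_of_ne fun h => hy1.not_ge (h ▸ hyl)
  have habove : ∀ t ∈ Ioc l 1, f t < y := fun t ht => lt_of_not_ge fun h =>
    ht.1.not_ge (le_csSup hSbdd ⟨⟨hδl.trans ht.1.le, ht.2⟩, h⟩)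
  have hfl : f l ≤ y := by
    have hcw : ContinuousWithinAt f (Ioi l) l :=
      (hcont l ⟨hl0, hl1⟩).mono_of_mem_nhdsWithin
        (mem_of_superset (Ioo_mem_nhdsGT hl1') fun t ht => ⟨hl0.trans ht.1, ht.2.le⟩)
    exact le_of_tendsto hcw
      (mem_of_superset (Ioo_mem_nhdsGT hl1') fun t ht => (habove t ⟨ht.1, ht.2.le⟩).le)
  refine ⟨l, ⟨hl0, hl1'⟩, le_antisymm hfl hyl, ?_⟩
  ext t
  constructor
  · rintro ⟨ht, ht0, ht1⟩
    exact ⟨ht0, le_of_not_gt fun h => (habove t ⟨h, ht1⟩).not_ge ht⟩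
  · rintro ⟨ht0, htl⟩
    exact ⟨hyl.trans (hanti ⟨ht0, htl.trans_lt hl1'⟩ ⟨ht0.trans_le htl, hl1'⟩ htl), ht0,
      htl.trans hl1⟩

lemma exists_lt_tailQ (μ : Measure ℝ) [IsProbabilityMeasure μ] {y : ℝ} (hy : 0 < μ (Ioi y)) :
    ∃ δ ∈ Ioo 0 1, y < tailQ μ δ := by
  have hU : ⋃ n : ℕ, Ici (y + 1 / (n + 1)) = Ioi y :=
    iUnion_Ici_eq_Ioi_of_lt_of_tendsto (fun _ => lt_add_of_pos_right y Nat.one_div_pos_of_nat)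
      (by simpa using tendsto_one_div_add_atTop_nhds_zero_nat.const_add y)
  obtain ⟨n, hn⟩ : ∃ n : ℕ, μ (Ici (y + 1 / (n + 1))) ≠ 0 := by
    by_contra! h
    exact hy.ne' (hU ▸ measure_iUnion_null h)
  have ht : 0 < tailFn μ (y + 1 / (n + 1)) := ENNReal.toReal_pos hn (measure_ne_top μ _)
  have hδ : min (tailFn μ (y + 1 / (n + 1))) (1 / 2) ∈ Ioo (0 : ℝ) 1 :=
    ⟨lt_min ht one_half_pos, (min_le_right _ _).trans_lt one_half_lt_one⟩
  refine ⟨_, hδ, (lt_add_of_pos_right y (Nat.one_div_pos_of_nat (n := n))).trans_le ?_⟩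
  exact (le_tailQ_iff μ hδ.1 hδ.2).mpr (min_le_left _ _)

lemma hlTransform_Ici_toReal_eq (μ : Measure ℝ) [IsProbabilityMeasure μ] (hμ : Integrable id μ)
    {y l : ℝ} (hl : 0 ≤ l) (h : avar μ ⁻¹' Ici y ∩ Ioc 0 1 = Ioc 0 l) :
    (hlTransform μ (Ici y)).toReal = l := by
  rw [hlTransform, Measure.map_apply_of_aemeasurable
      ((continuousOn_avar μ hμ).aemeasurable measurableSet_Ioc) measurableSet_Ici,
    Measure.restrict_apply' measurableSet_Ioc, h, Real.volume_Ioc, sub_zero,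
    ENNReal.toReal_ofReal hl]

theorem stmt_7 (μ : Measure ℝ) [IsProbabilityMeasure μ] (hμ : Integrable id μ) :
    ∀ y : ℝ, (∫ s, s ∂μ) < y → 0 < μ (Ioi y) →
      (hlTransform μ (Ici y)).toReal = ⨅ z : Ioi (0 : ℝ), callFn μ (y - (z : ℝ)) / (z : ℝ) := by
  intro y hy hpos
  obtain ⟨δ, hδ, hyδ⟩ := exists_lt_tailQ μ hpos
  have hyδ' : y ≤ avar μ δ := hyδ.le.trans (tailQ_le_avar μ hμ hδ)
  obtain ⟨l, hl, hyl, hsuper⟩ := (antitoneOn_avar μ hμ).exists_preimage_Ici_inter_Ioc_eq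
    (continuousOn_avar μ hμ) (Ioo_subset_Ioc_self hδ) hyδ' (by rwa [avar_one])
  have hδl : δ ≤ l := by
    have hδS : δ ∈ avar μ ⁻¹' Ici y ∩ Ioc 0 1 := ⟨hyδ', Ioo_subset_Ioc_self hδ⟩
    exact (hsuper ▸ hδS).2
  have hq : tailQ μ l < y := by
    rcases lt_or_ge (tailQ μ l) (tailQ μ δ) with h | h
    · exact hyl ▸ tailQ_lt_avar μ hμ hδ.1 hδl hl.2 h
    · exact absurd (hyδ.trans_le (h.trans (tailQ_le_avar μ hμ hl))) hyl.not_gt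
  have hI : tailQIntegral μ l = y * l := by
    rw [← hyl, avar_eq_div, div_mul_cancel₀ _ hl.1.ne']
  rw [hlTransform_Ici_toReal_eq μ hμ hl.1.le hsuper, iInf_callFn_div_eq μ hμ hl hI hq]
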